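/- arXiv:2306.02890 — 6 statements merged into one kernel-verified Lean document; each statement's English description precedes it below -/
import Mathlib

section
/- Let I be a relation instance fulfilling a set F of functional dependencies, p a position with attribute A, and a a value not occurring in the column of attribute A. Then for any set Q of positions (not containing p) and any other value a' not occurring in the column of A, the instance (I with positions Q replaced by distinct fresh variables and position p set to a) fulfills F if and only if (I with Q replaced by variables and p set to a') fulfills F. -/
open scoped Classical

/-- An instance with variables: `none` represents a distinct fresh variable. -/
def Fulfills {m : ℕ} (rows : Finset ℕ) (I : ℕ → Fin m → Option ℕ)
    (f : Finset (Fin m) × Fin m) : Prop :=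
  ∀ j1 ∈ rows, ∀ j2 ∈ rows,
    (I j1 f.2).isSome → (I j2 f.2).isSome →
    (∀ A ∈ f.1, ∃ v, I j1 A = some v ∧ I j2 A = some v) →
    I j1 f.2 = I j2 f.2

def FulfillsAll {m : ℕ} (rows : Finset ℕ) (I : ℕ → Fin m → Option ℕ)
    (F : Finset (Finset (Fin m) × Fin m)) : Prop :=
  ∀ f ∈ F, Fulfills rows I f

/-- Lift a total (variable-free) instance. -/
def toInst {m : ℕ} (I0 : ℕ → Fin m → ℕ) : ℕ → Fin m → Option ℕ :=
  fun j A => some (I0 j A)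

/-- Replace the positions in `Q` by distinct fresh variables and put value `a` at `p`. -/
def subst {m : ℕ} (I0 : ℕ → Fin m → ℕ) (Q : Finset (ℕ × Fin m)) (p : ℕ × Fin m)
    (a : ℕ) : ℕ → Fin m → Option ℕ :=
  fun j A => if (j, A) = p then some a else if (j, A) ∈ Q then none else some (I0 j A)

/-- The value at position `p` is unique with respect to `F`. -/
def UniqueAt {m : ℕ} (rows : Finset ℕ) (I0 : ℕ → Fin m → ℕ)
    (F : Finset (Finset (Fin m) × Fin m)) (p : ℕ × Fin m) : Prop :=
  ∀ f ∈ F, f.2 = p.2 → ∀ j' ∈ rows, (∀ A ∈ f.1, I0 p.1 A = I0 j' A) → p.1 = j'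

/-- Information content of position `p` (on the subinstance given by `rows` and `attrs`). -/
noncomputable def INF {m : ℕ} (rows : Finset ℕ) (attrs : Finset (Fin m))
    (I0 : ℕ → Fin m → ℕ) (F : Finset (Finset (Fin m) × Fin m))
    (p : ℕ × Fin m) (a : ℕ) : ℚ :=
  ((((rows ×ˢ attrs).erase p).powerset).filter
      (fun Q => FulfillsAll rows (subst I0 Q p a) F)).card
    / 2 ^ ((rows ×ˢ attrs).card - 1)
lemma fresh_value_mono {m : ℕ} (rows : Finset ℕ) (I0 : ℕ → Fin m → ℕ)
    (F : Finset (Finset (Fin m) × Fin m)) (p : ℕ × Fin m) (a a' : ℕ)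
    (ha : ∀ j ∈ rows, I0 j p.2 ≠ a)
    (ha' : ∀ j ∈ rows, I0 j p.2 ≠ a')
    (Q : Finset (ℕ × Fin m))
    (h : FulfillsAll rows (subst I0 Q p a) F) :
    FulfillsAll rows (subst I0 Q p a') F := by
  intro f hf j1 h1 j2 h2 hs1 hs2 hprem
  by_cases hj : j1 = j2
  · subst hj; rfl
  -- premise positions avoid p
  have hnp : ∀ A ∈ f.1, (j1, A) ≠ p ∧ (j2, A) ≠ p := by
    intro A hA
    obtain ⟨v, hv1, hv2⟩ := hprem A hA
    constructor
    · intro hpp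
      have hA2 : A = p.2 := by rw [← hpp]
      have hv1' : v = a' := by
        simpa [subst, hpp] using hv1.symm
      have hne2 : (j2, A) ≠ p := by
        intro hpp2
        exact hj (by have := hpp.trans hpp2.symm; exact (Prod.mk.injEq .. ▸ this).1)
      by_cases hQ2 : (j2, A) ∈ Q
      · simp [subst, hne2, hQ2] at hv2
      · have : I0 j2 A = v := (show v = I0 j2 A by simpa [subst, hne2, hQ2] using hv2.symm).symm
        exact ha' j2 h2 (by rw [← hA2, this, hv1'])
    · intro hpp
      have hA2 : A = p.2 := by rw [← hpp]
      have hv2' : v = a' := by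
        simpa [subst, hpp] using hv2.symm
      have hne1 : (j1, A) ≠ p := by
        intro hpp1
        exact hj (by have := hpp1.trans hpp.symm; exact (Prod.mk.injEq .. ▸ this).1)
      by_cases hQ1 : (j1, A) ∈ Q
      · simp [subst, hne1, hQ1] at hv1
      · have : I0 j1 A = v := (show v = I0 j1 A by simpa [subst, hne1, hQ1] using hv1.symm).symm
        exact ha' j1 h1 (by rw [← hA2, this, hv2'])
  -- agreement of the two instances away from p
  have hagree : ∀ j A, (j, A) ≠ p → subst I0 Q p a j A = subst I0 Q p a' j A := by
    intro j A hne; simp [subst, hne]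
  have hprem' : ∀ A ∈ f.1, ∃ v, subst I0 Q p a j1 A = some v ∧
      subst I0 Q p a j2 A = some v := by
    intro A hA
    obtain ⟨v, hv1, hv2⟩ := hprem A hA
    obtain ⟨hn1, hn2⟩ := hnp A hA
    exact ⟨v, by rw [hagree j1 A hn1]; exact hv1, by rw [hagree j2 A hn2]; exact hv2⟩
  have hsome : ∀ j, (subst I0 Q p a' j f.2).isSome → (subst I0 Q p a j f.2).isSome := by
    intro j hs
    by_cases hpe : (j, f.2) = p
    · simp [subst, hpe]
    · rw [hagree j f.2 hpe]; exact hs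
  have key := h f hf j1 h1 j2 h2 (hsome j1 hs1) (hsome j2 hs2) hprem'
  by_cases h1p : (j1, f.2) = p
  · by_cases h2p : (j2, f.2) = p
    · exact absurd ((Prod.mk.injEq .. ▸ h1p.trans h2p.symm).1) hj
    · exfalso
      have hk : some a = subst I0 Q p a j2 f.2 := by
        rw [← key]; simp [subst, h1p]
      by_cases hQ2 : (j2, f.2) ∈ Q
      · simp [subst, h2p, hQ2] at hk
      · have : I0 j2 f.2 = a := by simpa [subst, h2p, hQ2] using hk.symm
        have hf2 : f.2 = p.2 := by rw [← h1p]
        exact ha j2 h2 (hf2 ▸ this)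
  · by_cases h2p : (j2, f.2) = p
    · exfalso
      have hk : subst I0 Q p a j1 f.2 = some a := by
        rw [key]; simp [subst, h2p]
      by_cases hQ1 : (j1, f.2) ∈ Q
      · simp [subst, h1p, hQ1] at hk
      · have : I0 j1 f.2 = a := by simpa [subst, h1p, hQ1] using hk
        have hf2 : f.2 = p.2 := by rw [← h2p]
        exact ha j1 h1 (hf2 ▸ this)
    · rw [← hagree j1 f.2 h1p, ← hagree j2 f.2 h2p]; exact key
/-- fulfillment after substituting a fresh value does not depend on
the choice of fresh value. -/
theorem fresh_value_irrelevant {m : ℕ} (rows : Finset ℕ) (I0 : ℕ → Fin m → ℕ)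
    (F : Finset (Finset (Fin m) × Fin m)) (p : ℕ × Fin m) (a a' : ℕ)
    (hI : FulfillsAll rows (toInst I0) F)
    (hp : p ∈ rows ×ˢ (Finset.univ : Finset (Fin m)))
    (ha : ∀ j ∈ rows, I0 j p.2 ≠ a)
    (ha' : ∀ j ∈ rows, I0 j p.2 ≠ a')
    (Q : Finset (ℕ × Fin m))
    (hQ : Q ⊆ (rows ×ˢ (Finset.univ : Finset (Fin m))).erase p) :
    FulfillsAll rows (subst I0 Q p a) F ↔ FulfillsAll rows (subst I0 Q p a') F :=
  ⟨fresh_value_mono rows I0 F p a a' ha ha' Q,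
   fresh_value_mono rows I0 F p a' a ha' ha Q⟩
end

section
/- Let I be an instance fulfilling a set F of functional dependencies, p = (j,B) a position at attribute B, and a a value not occurring in the column of B. If the value at p is unique with respect to F, then for every subset Q ⊆ Pos \ {p} of positions, the instance (I_{Q←X})_{p←a} fulfills F. -/
open scoped Classical

/-- if the value at `p` is unique w.r.t. `F`, then for every subset
`Q ⊆ Pos \ {p}`, the instance `(I_{Q←X})_{p←a}` fulfills `F`. -/
theorem unique_implies_always_fulfills {m : ℕ} (rows : Finset ℕ) (I0 : ℕ → Fin m → ℕ)
    (F : Finset (Finset (Fin m) × Fin m)) (p : ℕ × Fin m) (a : ℕ)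
    (hI : FulfillsAll rows (toInst I0) F)
    (hp : p ∈ rows ×ˢ (Finset.univ : Finset (Fin m)))
    (ha : ∀ j ∈ rows, I0 j p.2 ≠ a)
    (huniq : UniqueAt rows I0 F p) :
    ∀ Q ⊆ (rows ×ˢ (Finset.univ : Finset (Fin m))).erase p,
      FulfillsAll rows (subst I0 Q p a) F := by
  intro Q hQ f hf j1 hj1 j2 hj2 hs1 hs2 hagree
  by_cases hj : j1 = j2
  · subst hj; rfl
  -- original rows agree on the lhs attributes
  have hagree0 : ∀ A ∈ f.1, I0 j1 A = I0 j2 A := by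
    intro A hA
    obtain ⟨v, hv1, hv2⟩ := hagree A hA
    simp only [subst] at hv1 hv2
    by_cases h1 : (j1, A) = p
    · have h2 : (j2, A) ≠ p := by
        intro h2; apply hj; have := h1.trans h2.symm
        exact (Prod.mk.injEq _ _ _ _ ▸ this).1
      rw [if_pos h1] at hv1
      rw [if_neg h2] at hv2
      split at hv2
      · exact absurd hv2 (by simp)
      · have hva : v = a := by injection hv1; omega
        have : I0 j2 A = a := by injection hv2; omega
        have hA2 : A = p.2 := congrArg Prod.snd h1
        exact absurd (hA2 ▸ this) (ha j2 hj2)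
    · by_cases h2 : (j2, A) = p
      · rw [if_pos h2] at hv2
        rw [if_neg h1] at hv1
        split at hv1
        · exact absurd hv1 (by simp)
        · have hva : v = a := by injection hv2; omega
          have : I0 j1 A = a := by injection hv1; omega
          have hA2 : A = p.2 := congrArg Prod.snd h2
          exact absurd (hA2 ▸ this) (ha j1 hj1)
      · rw [if_neg h1] at hv1
        rw [if_neg h2] at hv2
        split at hv1
        · exact absurd hv1 (by simp)
        · split at hv2
          · exact absurd hv2 (by simp)
          · injection hv1 with hv1; injection hv2 with hv2
            rw [hv1, hv2]
  -- neither target position equals p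
  have hne1 : (j1, f.2) ≠ p := by
    intro h1
    have hfB : f.2 = p.2 := congrArg Prod.snd h1
    have hj1p : j1 = p.1 := congrArg Prod.fst h1
    have := huniq f hf hfB j2 hj2 (fun A hA => hj1p ▸ hagree0 A hA)
    exact hj (hj1p.trans this)
  have hne2 : (j2, f.2) ≠ p := by
    intro h2
    have hfB : f.2 = p.2 := congrArg Prod.snd h2
    have hj2p : j2 = p.1 := congrArg Prod.fst h2
    have := huniq f hf hfB j1 hj1 (fun A hA => hj2p ▸ (hagree0 A hA).symm)
    exact hj (this.symm.trans hj2p.symm)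
  -- reduce to the original instance
  simp only [subst, if_neg hne1, if_neg hne2] at hs1 hs2 ⊢
  by_cases hq1 : (j1, f.2) ∈ Q
  · rw [if_pos hq1] at hs1; exact absurd hs1 (by simp)
  by_cases hq2 : (j2, f.2) ∈ Q
  · rw [if_pos hq2] at hs2; exact absurd hs2 (by simp)
  rw [if_neg hq1, if_neg hq2]
  have := hI f hf j1 hj1 j2 hj2 (by simp [toInst]) (by simp [toInst])
    (fun A hA => ⟨I0 j1 A, rfl, by rw [hagree0 A hA]; rfl⟩)
  simpa [toInst] using this
end

section
/- Let I ⊨ F, let J ⊇ J_0 and K ⊇ K_0, where J_0 is the set of row indices containing at least one non-unique position with respect to F, and K_0 is the set of all attributes occurring in any functional dependency of F. Then for every position p in the subinstance I(J,K), the information content satisfies INF_I(p|F) = INF_{I(J,K)}(p|F). -/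
open scoped Classical

/-- subtable reduction. If `J` contains all rows having some non-unique
position and `K` contains all attributes occurring in `F`, then the information
content of any position of the subinstance `I(J,K)` agrees with that in `I`. -/
theorem inf_subtable {m : ℕ} (rows : Finset ℕ) (I0 : ℕ → Fin m → ℕ)
    (F : Finset (Finset (Fin m) × Fin m)) (p : ℕ × Fin m) (a : ℕ)
    (hI : FulfillsAll rows (toInst I0) F)
    (J : Finset ℕ) (K : Finset (Fin m))
    (hJsub : J ⊆ rows)
    (hJ0 : ∀ j ∈ rows, (∃ B : Fin m, ¬ UniqueAt rows I0 F (j, B)) → j ∈ J)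
    (hK0 : ∀ f ∈ F, f.1 ⊆ K ∧ f.2 ∈ K)
    (hp : p ∈ J ×ˢ K)
    (ha : ∀ j ∈ rows, I0 j p.2 ≠ a) :
    INF rows Finset.univ I0 F p a = INF J K I0 F p a := by
  classical
  obtain ⟨hpJ, hpK⟩ := Finset.mem_product.mp hp
  have hprows : p ∈ rows ×ˢ (Finset.univ : Finset (Fin m)) :=
    Finset.mem_product.mpr ⟨hJsub hpJ, Finset.mem_univ _⟩
  set Sm := (J ×ˢ K).erase p with hSmdef
  set Big := (rows ×ˢ (Finset.univ : Finset (Fin m))).erase p with hBigdef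
  have hSmBig : Sm ⊆ Big := by
    apply Finset.erase_subset_erase
    exact Finset.product_subset_product hJsub (Finset.subset_univ K)
  -- pointwise equality of subst on the small grid
  have hpoint : ∀ Q : Finset (ℕ × Fin m), ∀ j ∈ J, ∀ A ∈ K,
      subst I0 Q p a j A = subst I0 (Q ∩ Sm) p a j A := by
    intro Q j hj A hA
    unfold subst
    by_cases hjp : (j, A) = p
    · simp [hjp]
    · have hmem : ((j, A) ∈ Q ∩ Sm) ↔ (j, A) ∈ Q := by
        simp only [Finset.mem_inter, hSmdef, Finset.mem_erase, Finset.mem_product]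
        tauto
      simp only [hjp, if_false]
      by_cases hQ : (j, A) ∈ Q
      · simp [hQ, hmem.mpr hQ]
      · simp [hQ, fun h => hQ (hmem.mp h)]
  -- value extraction
  have hval : ∀ Q : Finset (ℕ × Fin m), ∀ j A v, subst I0 Q p a j A = some v →
      ((j, A) = p ∧ v = a) ∨ ((j, A) ≠ p ∧ I0 j A = v) := by
    intro Q j A v hv
    unfold subst at hv
    by_cases hjp : (j, A) = p
    · left
      refine ⟨hjp, ?_⟩
      simp [hjp] at hv
      exact hv.symm
    · right
      refine ⟨hjp, ?_⟩
      simp only [hjp, if_false] at hv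
      by_cases hQ : (j, A) ∈ Q
      · simp [hQ] at hv
      · simp [hQ] at hv
        exact hv
  have key : ∀ Q : Finset (ℕ × Fin m),
      FulfillsAll rows (subst I0 Q p a) F ↔ FulfillsAll J (subst I0 (Q ∩ Sm) p a) F := by
    intro Q
    constructor
    · intro h f hf j1 hj1 j2 hj2 hs1 hs2 hag
      obtain ⟨hf1K, hf2K⟩ := hK0 f hf
      have e1 := hpoint Q j1 hj1 f.2 hf2K
      have e2 := hpoint Q j2 hj2 f.2 hf2K
      rw [← e1, ← e2]
      rw [← e1] at hs1
      rw [← e2] at hs2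
      refine h f hf j1 (hJsub hj1) j2 (hJsub hj2) hs1 hs2 ?_
      intro A hA
      obtain ⟨v, hv1, hv2⟩ := hag A hA
      exact ⟨v, by rw [hpoint Q j1 hj1 A (hf1K hA)]; exact hv1,
        by rw [hpoint Q j2 hj2 A (hf1K hA)]; exact hv2⟩
    · intro h f hf j1 hj1 j2 hj2 hs1 hs2 hag
      by_cases hj12 : j1 = j2
      · rw [hj12]
      obtain ⟨hf1K, hf2K⟩ := hK0 f hf
      have huniq : ∀ j ∈ rows, j ∉ J → ∀ B, UniqueAt rows I0 F (j, B) := by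
        intro j hjr hjJ B
        by_contra hc
        exact hjJ (hJ0 j hjr ⟨B, hc⟩)
      -- if one endpoint is outside J we get agreement in I0
      have hI0ag : ∀ jo ∈ rows, jo ∉ J → ∀ ji, (∀ A ∈ f.1,
            ∃ v, subst I0 Q p a jo A = some v ∧ subst I0 Q p a ji A = some v) →
          ∀ A ∈ f.1, I0 jo A = I0 ji A := by
        intro jo hjor hjoJ ji hagr A hA
        obtain ⟨v, hvo, hvi⟩ := hagr A hA
        have hop : (jo, A) ≠ p := by
          intro hcon
          apply hjoJ
          rw [show jo = p.1 from congrArg Prod.fst hcon]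
          exact hpJ
        have ho : I0 jo A = v := ((hval Q jo A v hvo).resolve_left (fun hc => hop hc.1)).2
        rcases hval Q ji A v hvi with ⟨hip, hva⟩ | ⟨_, hi⟩
        · exfalso
          apply ha jo hjor
          have hA2 : A = p.2 := congrArg Prod.snd hip
          rw [← hA2, ho, hva]
        · rw [ho, hi]
      by_cases hj1J : j1 ∈ J
      · by_cases hj2J : j2 ∈ J
        · have e1 := hpoint Q j1 hj1J f.2 hf2K
          have e2 := hpoint Q j2 hj2J f.2 hf2K
          rw [e1, e2]
          rw [e1] at hs1
          rw [e2] at hs2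
          refine h f hf j1 hj1J j2 hj2J hs1 hs2 ?_
          intro A hA
          obtain ⟨v, hv1, hv2⟩ := hag A hA
          exact ⟨v, by rw [← hpoint Q j1 hj1J A (hf1K hA)]; exact hv1,
            by rw [← hpoint Q j2 hj2J A (hf1K hA)]; exact hv2⟩
        · exfalso
          apply hj12
          have hagI0 : ∀ A ∈ f.1, I0 j2 A = I0 j1 A := by
            refine hI0ag j2 hj2 hj2J j1 ?_
            intro A hA
            obtain ⟨v, hv1, hv2⟩ := hag A hA
            exact ⟨v, hv2, hv1⟩
          exact (huniq j2 hj2 hj2J f.2 f hf rfl j1 hj1 hagI0).symm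
      · exfalso
        apply hj12
        exact huniq j1 hj1 hj1J f.2 f hf rfl j2 hj2 (hI0ag j1 hj1 hj1J j2 hag)
  -- counting
  have hcount : ((Big.powerset).filter (fun Q => FulfillsAll rows (subst I0 Q p a) F)).card
      = ((Sm.powerset).filter (fun Q => FulfillsAll J (subst I0 Q p a) F)).card
        * 2 ^ (Big \ Sm).card := by
    rw [← Finset.card_powerset (Big \ Sm), ← Finset.card_product]
    apply Finset.card_bij (fun Q _ => (Q ∩ Sm, Q \ Sm))
    · intro Q hQ
      simp only [Finset.mem_filter, Finset.mem_powerset] at hQ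
      simp only [Finset.mem_product, Finset.mem_filter, Finset.mem_powerset]
      refine ⟨⟨Finset.inter_subset_right, ?_⟩, ?_⟩
      · exact (key Q).mp hQ.2
      · exact Finset.sdiff_subset_sdiff hQ.1 (le_refl Sm)
    · intro Q1 hQ1 Q2 hQ2 heq
      simp only [Finset.mem_filter, Finset.mem_powerset] at hQ1 hQ2
      have h1 := congrArg Prod.fst heq
      have h2 := congrArg Prod.snd heq
      simp only at h1 h2
      apply Finset.ext
      intro x
      by_cases hx : x ∈ Sm
      · constructor <;> intro hxq
        · exact (Finset.mem_inter.mp (h1 ▸ Finset.mem_inter.mpr ⟨hxq, hx⟩)).1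
        · exact (Finset.mem_inter.mp (h1 ▸ Finset.mem_inter.mpr ⟨hxq, hx⟩)).1
      · constructor <;> intro hxq
        · exact (Finset.mem_sdiff.mp (h2 ▸ Finset.mem_sdiff.mpr ⟨hxq, hx⟩)).1
        · exact (Finset.mem_sdiff.mp (h2 ▸ Finset.mem_sdiff.mpr ⟨hxq, hx⟩)).1
    · intro b hb
      simp only [Finset.mem_product, Finset.mem_filter, Finset.mem_powerset] at hb
      obtain ⟨⟨hb1s, hb1f⟩, hb2⟩ := hb
      refine ⟨b.1 ∪ b.2, ?_, ?_⟩
      · simp only [Finset.mem_filter, Finset.mem_powerset]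
        constructor
        · exact Finset.union_subset (hb1s.trans hSmBig) (hb2.trans (Finset.sdiff_subset))
        · have hrec : (b.1 ∪ b.2) ∩ Sm = b.1 := by
            rw [Finset.union_inter_distrib_right]
            have hb2e : b.2 ∩ Sm = ∅ := by
              rw [← Finset.disjoint_iff_inter_eq_empty]
              exact Finset.disjoint_of_subset_left hb2 Finset.sdiff_disjoint
            rw [Finset.inter_eq_left.mpr hb1s, hb2e, Finset.union_empty]
          rw [key, hrec]
          exact hb1f
      · have hrec : (b.1 ∪ b.2) ∩ Sm = b.1 := by
          rw [Finset.union_inter_distrib_right]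
          have hb2e : b.2 ∩ Sm = ∅ := by
            rw [← Finset.disjoint_iff_inter_eq_empty]
            exact Finset.disjoint_of_subset_left hb2 Finset.sdiff_disjoint
          rw [Finset.inter_eq_left.mpr hb1s, hb2e, Finset.union_empty]
        have hrec2 : (b.1 ∪ b.2) \ Sm = b.2 := by
          rw [Finset.union_sdiff_distrib]
          have : b.1 \ Sm = ∅ := Finset.sdiff_eq_empty_iff_subset.mpr hb1s
          rw [this, Finset.empty_union, Finset.sdiff_eq_self_iff_disjoint.mpr
            (Finset.disjoint_of_subset_left hb2 Finset.sdiff_disjoint)]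
        rw [hrec, hrec2]
  have hb : (rows ×ˢ (Finset.univ : Finset (Fin m))).card - 1 = Big.card :=
    (Finset.card_erase_of_mem hprows).symm
  have hs : (J ×ˢ K).card - 1 = Sm.card := (Finset.card_erase_of_mem hp).symm
  have hbs : Big.card = (Big \ Sm).card + Sm.card := by
    rw [Finset.card_sdiff_add_card_eq_card hSmBig]
  unfold INF
  rw [hb, hs, hcount]
  push_cast
  rw [hbs, pow_add,
    mul_comm (((Finset.filter (fun Q => FulfillsAll J (subst I0 Q p a) F) Sm.powerset).card : ℚ)) _,
    mul_div_mul_left _ _ (by positivity : ((2:ℚ) ^ (Big \ Sm).card) ≠ 0)]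
end

section
/- Let I be a relation instance fulfilling F, and let B be an attribute that does not appear on the right-hand side of any functional dependency in F. Then every position p in the column of B has information content INF_I(p|F) = 1. -/
open scoped Classical

/-- if `p`'s attribute appears on no right-hand side of `F`,
then `INF_I(p|F) = 1`. -/
theorem inf_eq_one_of_no_rhs {m : ℕ} (rows : Finset ℕ) (I0 : ℕ → Fin m → ℕ)
    (F : Finset (Finset (Fin m) × Fin m)) (p : ℕ × Fin m) (a : ℕ)
    (hI : FulfillsAll rows (toInst I0) F)
    (hp : p ∈ rows ×ˢ (Finset.univ : Finset (Fin m)))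
    (ha : ∀ j ∈ rows, I0 j p.2 ≠ a)
    (hB : ∀ f ∈ F, f.2 ≠ p.2) :
    INF rows Finset.univ I0 F p a = 1 := by
  classical
  unfold INF
  have hall : ∀ Q ∈ ((rows ×ˢ (Finset.univ : Finset (Fin m))).erase p).powerset,
      FulfillsAll rows (subst I0 Q p a) F := by
    intro Q hQ f hf
    intro j1 hj1 j2 hj2 h1 h2 hlhs
    have hfp : f.2 ≠ p.2 := hB f hf
    -- the values at (j, f.2) are `some (I0 j f.2)` since (j,f.2) ≠ p and (j,f.2) ∉ Q or none
    have key : ∀ j, (subst I0 Q p a j f.2).isSome → subst I0 Q p a j f.2 = some (I0 j f.2) := by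
      intro j hs
      unfold subst at hs ⊢
      have hne : (j, f.2) ≠ p := by
        intro h; exact hfp (by rw [← h])
      rw [if_neg hne] at hs ⊢
      by_cases hQ' : (j, f.2) ∈ Q
      · simp [hQ'] at hs
      · rw [if_neg hQ']
    rw [key j1 h1, key j2 h2]
    -- values agree on LHS for the original instance
    have horig : ∀ A ∈ f.1, ∃ v, toInst I0 j1 A = some v ∧ toInst I0 j2 A = some v := by
      intro A hA
      obtain ⟨v, hv1, hv2⟩ := hlhs A hA
      unfold subst at hv1 hv2
      unfold toInst
      by_cases e1 : (j1, A) = p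
      · by_cases e2 : (j2, A) = p
        · have : j1 = j2 := by
            have := e1.trans e2.symm
            exact (Prod.mk.injEq _ _ _ _).mp this |>.1
          subst this; exact ⟨I0 j1 A, rfl, rfl⟩
        · rw [if_pos e1] at hv1
          rw [if_neg e2] at hv2
          by_cases hQ2 : (j2, A) ∈ Q
          · simp [hQ2] at hv2
          · rw [if_neg hQ2] at hv2
            exfalso
            have hAp : A = p.2 := congrArg Prod.snd e1
            have := ha j2 hj2
            rw [← hAp] at this
            exact this (by simpa using hv2.trans hv1.symm)
      · by_cases e2 : (j2, A) = p
        · rw [if_pos e2] at hv2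
          rw [if_neg e1] at hv1
          by_cases hQ1 : (j1, A) ∈ Q
          · simp [hQ1] at hv1
          · rw [if_neg hQ1] at hv1
            exfalso
            have hAp : A = p.2 := congrArg Prod.snd e2
            have := ha j1 hj1
            rw [← hAp] at this
            exact this (by simpa using hv1.trans hv2.symm)
        · rw [if_neg e1] at hv1
          rw [if_neg e2] at hv2
          by_cases hQ1 : (j1, A) ∈ Q
          · simp [hQ1] at hv1
          · by_cases hQ2 : (j2, A) ∈ Q
            · simp [hQ2] at hv2
            · rw [if_neg hQ1] at hv1
              rw [if_neg hQ2] at hv2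
              exact ⟨v, hv1, hv2⟩
    have := hI f hf j1 hj1 j2 hj2 (by simp [toInst]) (by simp [toInst]) horig
    unfold toInst at this
    injection this with h
    rw [h]
  rw [Finset.filter_true_of_mem hall, Finset.card_powerset,
    Finset.card_erase_of_mem hp]
  push_cast
  apply div_self
  positivity
end

section
/- If the value at position p = (j,B) is unique with respect to a functional dependency f: A_1...A_s → B in instance I, and I ⊨ f, then for every value v, the instance I_{p←v} fulfills f. -/
open scoped Classical

/-- if the value at `p = (j,B)` is unique w.r.t. a single functional
dependency `f` with right-hand side `B` and `I ⊨ f`, then `I_{p←v} ⊨ f` for every `v`. -/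
theorem unique_single_fd {m : ℕ} (rows : Finset ℕ) (I0 : ℕ → Fin m → ℕ)
    (f : Finset (Fin m) × Fin m) (p : ℕ × Fin m)
    (hI : Fulfills rows (toInst I0) f)
    (hp : p ∈ rows ×ˢ (Finset.univ : Finset (Fin m)))
    (hrhs : f.2 = p.2)
    (huniq : ∀ j' ∈ rows, (∀ A ∈ f.1, I0 p.1 A = I0 j' A) → p.1 = j') :
    ∀ v : ℕ, Fulfills rows (subst I0 ∅ p v) f := by
  intro v j1 h1 j2 h2 _ _ hagree
  by_cases e1 : j1 = p.1 <;> by_cases e2 : j2 = p.1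
  · rw [e1, e2]
  · -- j1 = p.1, j2 ≠ p.1
    by_cases hB : p.2 ∈ f.1
    · obtain ⟨w, hw1, hw2⟩ := hagree p.2 hB
      simp [subst, Prod.ext_iff, e1, e2, hrhs] at hw1 hw2 ⊢
      exact hw1.trans hw2.symm
    · exfalso
      apply e2
      symm
      apply huniq j2 h2
      intro A hA
      have hAne : A ≠ p.2 := fun h => hB (h ▸ hA)
      obtain ⟨w, hw1, hw2⟩ := hagree A hA
      simp [subst, Prod.ext_iff, e1, e2, hAne] at hw1 hw2
      exact hw1.trans hw2.symm
  · -- j2 = p.1, j1 ≠ p.1 (symmetric)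
    by_cases hB : p.2 ∈ f.1
    · obtain ⟨w, hw1, hw2⟩ := hagree p.2 hB
      simp [subst, Prod.ext_iff, e1, e2, hrhs] at hw1 hw2 ⊢
      exact hw1.trans hw2.symm
    · exfalso
      apply e1
      symm
      apply huniq j1 h1
      intro A hA
      have hAne : A ≠ p.2 := fun h => hB (h ▸ hA)
      obtain ⟨w, hw1, hw2⟩ := hagree A hA
      simp [subst, Prod.ext_iff, e1, e2, hAne] at hw1 hw2
      exact hw2.trans hw1.symm
  · -- neither is p.1
    have key : ∀ A, subst I0 ∅ p v j1 A = toInst I0 j1 A ∧ subst I0 ∅ p v j2 A = toInst I0 j2 A := by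
      intro A
      constructor <;> simp [subst, toInst, Prod.ext_iff, e1, e2]
    rw [(key f.2).1, (key f.2).2]
    apply hI j1 h1 j2 h2 (by simp [toInst]) (by simp [toInst])
    intro A hA
    obtain ⟨w, hw1, hw2⟩ := hagree A hA
    exact ⟨w, (key A).1 ▸ hw1, (key A).2 ▸ hw2⟩
end

section
/- Monotonicity of deletion: if (I_{Q←X})_{p←a} ⊨ F and Q ⊆ Q' ⊆ Pos\{p}, then (I_{Q'←X})_{p←a} ⊨ F. -/
open scoped Classical

/-- monotonicity of deletion. -/
theorem fulfills_mono_deletion {m : ℕ} (rows : Finset ℕ) (I0 : ℕ → Fin m → ℕ)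
    (F : Finset (Finset (Fin m) × Fin m)) (p : ℕ × Fin m) (a : ℕ)
    (Q Q' : Finset (ℕ × Fin m))
    (hQQ' : Q ⊆ Q')
    (hQ' : Q' ⊆ (rows ×ˢ (Finset.univ : Finset (Fin m))).erase p)
    (h : FulfillsAll rows (subst I0 Q p a) F) :
    FulfillsAll rows (subst I0 Q' p a) F := by
  have key : ∀ j A v, subst I0 Q' p a j A = some v → subst I0 Q p a j A = some v := by
    intro j A v hv
    unfold subst at hv ⊢
    by_cases hp : (j, A) = p
    · simpa [hp] using hv
    · by_cases hq' : (j, A) ∈ Q'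
      · simp [hp, hq'] at hv
      · have hq : (j, A) ∉ Q := fun hh => hq' (hQQ' hh)
        simpa [hp, hq', hq] using hv
  intro f hf j1 h1 j2 h2 hs1 hs2 hagree
  obtain ⟨v1, hv1⟩ := Option.isSome_iff_exists.mp hs1
  obtain ⟨v2, hv2⟩ := Option.isSome_iff_exists.mp hs2
  have e1 := key j1 f.2 v1 hv1
  have e2 := key j2 f.2 v2 hv2
  have := h f hf j1 h1 j2 h2 (by simp [e1]) (by simp [e2]) ?_
  · rw [hv1, hv2]; rw [e1, e2] at this; exact this
  · intro A hA
    obtain ⟨v, hva, hvb⟩ := hagree A hA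
    exact ⟨v, key j1 A v hva, key j2 A v hvb⟩
end
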